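/- arXiv:0909.0918 — 2 statements merged into one kernel-verified Lean document; each statement's English description precedes it below -/
import Mathlib

section
/- Let n ≥ 4 and let c₀ < c₁ < … < c_{n-1} be prime numbers such that S := ∑_{i=0}^{n-2} 1/cᵢ satisfies S < 1 < S + 1/c_{n-1}, with c_{n-1} > 8, and assume c_{n-1} is the largest prime q satisfying S + 1/q > 1 (i.e., for every prime q > c_{n-1} one has S + 1/q ≤ 1). Then for any primes p₁ < p₂ < p₃ with c_{n-1} < pⱼ < 2·c_{n-1} for j = 1,2,3, the (n+1)-tuple of primes (c₀, …, c_{n-2}, p₂, p₃) satisfies S + 1/p₂ < 1 < S + 1/p₂ + 1/p₃. -/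
theorem one_div_lt_one_div_add_one_div_of_lt_two_mul {K : Type*} [Field K] [LinearOrder K]
    [IsStrictOrderedRing K] {c p q : K} (hp : 0 < p) (hq : 0 < q) (hpc : p < 2 * c)
    (hqc : q < 2 * c) : 1 / c < 1 / p + 1 / q := by
  have hc : 0 < c := by linarith
  calc 1 / c = 1 / (2 * c) + 1 / (2 * c) := by field_simp; ring
    _ < 1 / p + 1 / q := by gcongr

theorem stmt_1_general (n : ℕ) (c : ℕ → ℕ)
    (S : ℚ) (hS2 : 1 < S + 1 / (c (n - 1) : ℚ))
    (hmax : ∀ q : ℕ, Nat.Prime q → c (n - 1) < q → S + 1 / (q : ℚ) ≤ 1)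
    (p₁ p₂ p₃ : ℕ)
    (hp₁ : Nat.Prime p₁)
    (h12 : p₁ < p₂)
    (hb₁ : c (n - 1) < p₁ ∧ p₁ < 2 * c (n - 1))
    (hb₂ : c (n - 1) < p₂ ∧ p₂ < 2 * c (n - 1))
    (hb₃ : c (n - 1) < p₃ ∧ p₃ < 2 * c (n - 1)) :
    S + 1 / (p₂ : ℚ) < 1 ∧ 1 < S + 1 / (p₂ : ℚ) + 1 / (p₃ : ℚ) := by
  have hp₁pos : (0 : ℚ) < p₁ := by exact_mod_cast hb₁.1.pos
  have hp₂pos : (0 : ℚ) < p₂ := by exact_mod_cast hb₂.1.pos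
  have hp₃pos : (0 : ℚ) < p₃ := by exact_mod_cast hb₃.1.pos
  constructor
  · calc S + 1 / (p₂ : ℚ) < S + 1 / (p₁ : ℚ) := by gcongr
      _ ≤ 1 := hmax p₁ hp₁ hb₁.1
  · have hsum : 1 / (c (n - 1) : ℚ) < 1 / (p₂ : ℚ) + 1 / (p₃ : ℚ) :=
      one_div_lt_one_div_add_one_div_of_lt_two_mul hp₂pos hp₃pos
        (by exact_mod_cast hb₂.2) (by exact_mod_cast hb₃.2)
    linarith

/-- The inductive step in the construction of primes `c₀ < … < c_{n-1}, p₂, p₃` whose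
reciprocal sums satisfy `S + 1/p₂ < 1 < S + 1/p₂ + 1/p₃`. -/
theorem stmt_1 (n : ℕ) (hn : 4 ≤ n) (c : ℕ → ℕ)
    (hc_prime : ∀ i, i ≤ n - 1 → Nat.Prime (c i))
    (hc_mono : ∀ i j, i < j → j ≤ n - 1 → c i < c j)
    (S : ℚ) (hS : S = ∑ i ∈ Finset.range (n - 1), (1 : ℚ) / (c i : ℚ))
    (hS1 : S < 1) (hS2 : 1 < S + 1 / (c (n - 1) : ℚ))
    (h8 : 8 < c (n - 1))
    (hmax : ∀ q : ℕ, Nat.Prime q → c (n - 1) < q → S + 1 / (q : ℚ) ≤ 1)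
    (p₁ p₂ p₃ : ℕ)
    (hp₁ : Nat.Prime p₁) (hp₂ : Nat.Prime p₂) (hp₃ : Nat.Prime p₃)
    (h12 : p₁ < p₂) (h23 : p₂ < p₃)
    (hb₁ : c (n - 1) < p₁ ∧ p₁ < 2 * c (n - 1))
    (hb₂ : c (n - 1) < p₂ ∧ p₂ < 2 * c (n - 1))
    (hb₃ : c (n - 1) < p₃ ∧ p₃ < 2 * c (n - 1)) :
    S + 1 / (p₂ : ℚ) < 1 ∧ 1 < S + 1 / (p₂ : ℚ) + 1 / (p₃ : ℚ) :=
  stmt_1_general n c S hS2 hmax p₁ p₂ p₃ hp₁ h12 hb₁ hb₂ hb₃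
end

section
/- Let ζ ∈ ℂ be a primitive fifth root of unity, let P ∈ SL(5,ℂ) be the cyclic permutation matrix sending the standard basis vector eᵢ to e_{i+1} (indices modulo 5), let D = diag(ζ, ζ², ζ³, ζ⁴, 1) ∈ SL(5,ℂ), and let ℍ = ⟨P, D⟩ ≤ SL(5,ℂ). Let n ≥ 0 be an integer and let W be the complex vector space of homogeneous polynomials of degree n in ℂ[x₁,…,x₅], on which ℍ acts by (g·f)(x) = f(g⁻¹·x). If V ⊆ W is an ℍ-invariant linear subspace, then either 5 divides dim V or 5 divides n. -/
/-!
Write `D` and `P` also for the operators by which the two matrices act on `V`. Since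
`D P = ζ P D` as matrices and `f(c x) = cⁿ f(x)` for `f` homogeneous of degree `n`, these operators
satisfy `D P = ω P D` with `ω = ζ⁴ⁿ`, a primitive fifth root of unity when `5 ∤ n`. Conjugating
by `P` then shows `tr Dʲ = ωʲ tr Dʲ`, so `tr Dʲ = 0` for `0 < j < 5`. As `D⁵ = 1`, the operator
`(1 + D + ⋯ + D⁴) / 5` is a projection, and its trace, which is its rank, equals `dim V / 5`.
-/

/-- The action of a matrix `g` on polynomials, `f ↦ f(g ⬝ x)`; the group action of `g`
on a polynomial `f` is then `polyAct g⁻¹ f`, i.e. `(g · f)(x) = f(g⁻¹ ⬝ x)`. -/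
noncomputable def polyAct (g : Matrix (Fin 5) (Fin 5) ℂ) :
    MvPolynomial (Fin 5) ℂ → MvPolynomial (Fin 5) ℂ :=
  MvPolynomial.aeval fun i => ∑ j, MvPolynomial.C (g i j) * MvPolynomial.X j

open Finset Module LinearMap MvPolynomial
open scoped MatrixGroups

theorem pow_mul_eq_smul_mul_pow {R A : Type*} [CommSemiring R] [Semiring A] [Algebra R A]
    {a b : A} {c : R} (hab : a * b = c • (b * a)) (j : ℕ) :
    a ^ j * b = c ^ j • (b * a ^ j) := by
  induction j with
  | zero => simp
  | succ j ih =>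
    rw [pow_succ', mul_assoc, ih, mul_smul_comm, ← mul_assoc, hab, smul_mul_assoc, smul_smul,
      mul_assoc, ← pow_succ', ← pow_succ]

theorem geom_sum_mul_self_of_pow_eq_one {A : Type*} [Ring A] {a : A} {m : ℕ} (ha : a ^ m = 1) :
    (∑ j ∈ range m, a ^ j) * ∑ j ∈ range m, a ^ j = m • ∑ j ∈ range m, a ^ j := by
  set S := ∑ j ∈ range m, a ^ j
  have hSa : S * a = S := by
    have := geom_sum_mul a m
    rwa [ha, sub_self, mul_sub, mul_one, sub_eq_zero] at this
  have hSpow : ∀ j, S * a ^ j = S := by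
    intro j
    induction j with
    | zero => simp
    | succ j ih => rw [pow_succ, ← mul_assoc, ih, hSa]
  rw [mul_sum, sum_congr rfl fun j _ => hSpow j, sum_const, card_range]

section Trace

variable {K V : Type*} [Field K] [AddCommGroup V] [Module K V]

theorem LinearMap.trace_eq_zero_of_mul_eq_smul_mul {a b : Module.End K V} {c : K}
    (hb : IsUnit b) (hab : a * b = c • (b * a)) (hc : c ≠ 1) : trace K V a = 0 := by
  obtain ⟨b, rfl⟩ := hb
  have h : trace K V a = c * trace K V a := calc
    trace K V a = trace K V (↑b⁻¹ * (a * b)) := by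
      rw [trace_mul_comm, mul_assoc, b.mul_inv, mul_one]
    _ = c * trace K V a := by
      rw [hab, mul_smul_comm, ← mul_assoc, b.inv_mul, one_mul, map_smul, smul_eq_mul]
  have : (c - 1) * trace K V a = 0 := by rw [sub_mul, ← h]; ring
  exact (mul_eq_zero.mp this).resolve_left (sub_ne_zero.mpr hc)

variable [FiniteDimensional K V] [CharZero K]

theorem dvd_finrank_of_pow_eq_one_of_trace_pow_eq_zero {a : Module.End K V} {m : ℕ}
    (hm : 0 < m) (ha : a ^ m = 1) (htr : ∀ j, 0 < j → j < m → trace K V (a ^ j) = 0) :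
    m ∣ finrank K V := by
  have hm' : (m : K) ≠ 0 := Nat.cast_ne_zero.mpr hm.ne'
  set π : Module.End K V := (m : K)⁻¹ • ∑ j ∈ range m, a ^ j
  have hπ : IsIdempotentElem π := by
    rw [IsIdempotentElem, smul_mul_smul_comm, geom_sum_mul_self_of_pow_eq_one ha,
      ← Nat.cast_smul_eq_nsmul K, smul_smul]
    congr 1
    field_simp
  have htrace : trace K V π = (m : K)⁻¹ * finrank K V := by
    obtain ⟨k, rfl⟩ := Nat.exists_eq_succ_of_ne_zero hm.ne'
    rw [map_smul, map_sum, sum_range_succ', pow_zero, trace_one, smul_eq_mul,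
      sum_eq_zero fun j hj => htr (j + 1) j.succ_pos (by simpa using hj), zero_add]
  have hrank := hπ.isProj_range.trace.symm.trans htrace
  field_simp at hrank
  exact Dvd.intro_left _ (by exact_mod_cast hrank)

theorem dvd_finrank_of_mul_eq_smul_mul {a b : Module.End K V} {ω : K} {m : ℕ} (hm : 0 < m)
    (hω : IsPrimitiveRoot ω m) (ha : a ^ m = 1) (hb : IsUnit b) (hab : a * b = ω • (b * a)) :
    m ∣ finrank K V :=
  dvd_finrank_of_pow_eq_one_of_trace_pow_eq_zero hm ha fun j hj hjm =>
    trace_eq_zero_of_mul_eq_smul_mul hb (pow_mul_eq_smul_mul_pow hab j)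
      (hω.pow_ne_one_of_pos_of_lt hj.ne' hjm)

end Trace

theorem MvPolynomial.IsHomogeneous.aeval_smul {σ R S : Type*} [Fintype σ] [CommSemiring R]
    [CommSemiring S] [Algebra R S] {φ : MvPolynomial σ R} {n : ℕ} (hφ : φ.IsHomogeneous n)
    (c : R) (u : σ → S) :
    MvPolynomial.aeval (c • u) φ = c ^ n • MvPolynomial.aeval u φ := by
  simp only [aeval_eq_eval₂Hom, coe_eval₂Hom, eval₂_eq', smul_sum]
  refine sum_congr rfl fun d hd => ?_
  have hdeg : ∑ i, d i = n := by
    simpa [Finsupp.weight_apply, Finsupp.sum_fintype] using hφ (mem_support_iff.mp hd)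
  simp only [Pi.smul_apply, smul_pow, prod_smul, prod_pow_eq_pow_sum, hdeg]
  rw [mul_smul_comm]

theorem polyAct_polyAct (g h : Matrix (Fin 5) (Fin 5) ℂ) (f : MvPolynomial (Fin 5) ℂ) :
    polyAct g (polyAct h f) = polyAct (h * g) f := by
  unfold polyAct
  rw [← AlgHom.comp_apply]
  refine DFunLike.congr_fun (algHom_ext fun i => ?_) f
  simp only [AlgHom.coe_comp, Function.comp_apply, aeval_X, map_sum, map_mul, aeval_C,
    algebraMap_eq, Matrix.mul_apply, mul_sum, sum_mul, mul_assoc]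
  rw [sum_comm]

theorem polyAct_one (f : MvPolynomial (Fin 5) ℂ) : polyAct 1 f = f := by
  simp [polyAct, Matrix.one_apply]

theorem polyAct_smul {n : ℕ} {f : MvPolynomial (Fin 5) ℂ} (hf : f.IsHomogeneous n) (c : ℂ)
    (M : Matrix (Fin 5) (Fin 5) ℂ) : polyAct (c • M) f = c ^ n • polyAct M f := by
  have : (fun i => ∑ j, C ((c • M) i j) * X j) = c • fun i => ∑ j, C (M i j) * X j := by
    ext1 i
    simp only [Matrix.smul_apply, smul_eq_mul, map_mul, mul_assoc, Pi.smul_apply, smul_sum,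
      smul_eq_C_mul]
  rw [polyAct, this]
  exact hf.aeval_smul c _

noncomputable def polyRep :
    Representation ℂ SL(5, ℂ) (MvPolynomial (Fin 5) ℂ) where
  toFun g := (aeval fun i => ∑ j,
    C ((g⁻¹ : SL(5, ℂ)) i j) * X j).toLinearMap
  map_one' := LinearMap.ext fun f => by
    change polyAct ((1⁻¹ : SL(5, ℂ)) : Matrix (Fin 5) (Fin 5) ℂ) f = f
    rw [inv_one, Matrix.SpecialLinearGroup.coe_one, polyAct_one]
  map_mul' g h := LinearMap.ext fun f => by
    change polyAct ((g * h)⁻¹ : SL(5, ℂ)) f =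
      polyAct ((g⁻¹ : SL(5, ℂ)) : Matrix (Fin 5) (Fin 5) ℂ)
        (polyAct ((h⁻¹ : SL(5, ℂ)) : Matrix (Fin 5) (Fin 5) ℂ) f)
    rw [polyAct_polyAct, mul_inv_rev, Matrix.SpecialLinearGroup.coe_mul]

theorem polyRep_apply (g : SL(5, ℂ)) (f : MvPolynomial (Fin 5) ℂ) :
    polyRep g f =
      polyAct ((g⁻¹ : SL(5, ℂ)) : Matrix (Fin 5) (Fin 5) ℂ) f :=
  rfl

theorem polyRep_apply_of_coe_eq_smul {g h : SL(5, ℂ)} {c : ℂ}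
    (hgh : (g : Matrix (Fin 5) (Fin 5) ℂ) = c • (h : Matrix (Fin 5) (Fin 5) ℂ)) {n : ℕ}
    {f : MvPolynomial (Fin 5) ℂ} (hf : f.IsHomogeneous n) :
    polyRep g f = (c ^ 4) ^ n • polyRep h f := by
  -- the inverse in `SL(5)` is the adjugate, and `adj (c • M) = c ^ 4 • adj M`
  rw [polyRep_apply, polyRep_apply, Matrix.SpecialLinearGroup.coe_inv,
    Matrix.SpecialLinearGroup.coe_inv, hgh, Matrix.adjugate_smul, Fintype.card_fin]
  exact polyAct_smul hf _ _

def shiftMatrix (R : Type*) [Zero R] [One R] : Matrix (Fin 5) (Fin 5) R :=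
  Matrix.of fun j i => if j = i + 1 then 1 else 0

def clockMatrix {R : Type*} [CommRing R] (ζ : R) : Matrix (Fin 5) (Fin 5) R :=
  Matrix.diagonal ![ζ, ζ ^ 2, ζ ^ 3, ζ ^ 4, 1]

section ClockShift

variable {R : Type*} [CommRing R] {ζ : R}

theorem clockMatrix_pow_five (hζ : ζ ^ 5 = 1) : clockMatrix ζ ^ 5 = 1 := by
  rw [clockMatrix, Matrix.diagonal_pow, ← Matrix.diagonal_one]
  congr 1
  ext i
  fin_cases i <;> simp [pow_right_comm _ _ 5, hζ]

theorem clockMatrix_mul_shiftMatrix (hζ : ζ ^ 5 = 1) :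
    clockMatrix ζ * shiftMatrix R = ζ • (shiftMatrix R * clockMatrix ζ) := by
  ext i j
  fin_cases i <;> fin_cases j <;>
    simp [clockMatrix, shiftMatrix, Matrix.diagonal_mul, Matrix.mul_diagonal] <;> grind

end ClockShift

/-- Let `ℍ = ⟨P, D⟩ ⊆ SL(5,ℂ)` be the Heisenberg group in its Schrödinger representation.
If `V` is an `ℍ`-invariant subspace of the space of homogeneous polynomials of degree `n`
in `5` variables, then `5 ∣ dim V` or `5 ∣ n`. -/
theorem stmt_7 (ζ : ℂ) (hζ : IsPrimitiveRoot ζ 5)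
    (P D : Matrix.SpecialLinearGroup (Fin 5) ℂ)
    (hP : (P : Matrix (Fin 5) (Fin 5) ℂ) =
      Matrix.of fun j i : Fin 5 => if j = i + 1 then (1 : ℂ) else 0)
    (hD : (D : Matrix (Fin 5) (Fin 5) ℂ) = Matrix.diagonal ![ζ, ζ ^ 2, ζ ^ 3, ζ ^ 4, 1])
    (H : Subgroup (Matrix.SpecialLinearGroup (Fin 5) ℂ))
    (hH : H = Subgroup.closure {P, D})
    (n : ℕ) (V : Submodule ℂ (MvPolynomial (Fin 5) ℂ))
    (hV : V ≤ MvPolynomial.homogeneousSubmodule (Fin 5) ℂ n)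
    (hinv : ∀ g ∈ H, ∀ f ∈ V,
      polyAct ((g⁻¹ : Matrix.SpecialLinearGroup (Fin 5) ℂ) : Matrix (Fin 5) (Fin 5) ℂ) f ∈ V) :
    5 ∣ Module.finrank ℂ V ∨ 5 ∣ n := by
  refine or_iff_not_imp_right.2 fun hn => ?_
  have hP' : (P : Matrix (Fin 5) (Fin 5) ℂ) = shiftMatrix ℂ := hP
  have hD' : (D : Matrix (Fin 5) (Fin 5) ℂ) = clockMatrix ζ := hD
  have hPH : P ∈ H := hH ▸ Subgroup.subset_closure (by simp)
  have hDH : D ∈ H := hH ▸ Subgroup.subset_closure (by simp)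
  have : FiniteDimensional ℂ (homogeneousSubmodule (Fin 5) ℂ n) :=
    Module.Finite.iff_fg.mpr (homogeneousSubmodule_fg (Fin 5) ℂ n)
  have : FiniteDimensional ℂ V := Submodule.finiteDimensional_of_le hV
  let ρ := Representation.subrepresentation (polyRep.comp H.subtype) V
    fun g f hf => hinv g g.2 f hf
  have hD5 : (⟨D, hDH⟩ : H) ^ 5 = 1 := Subtype.ext <| Subtype.ext <| by
    simp [Matrix.SpecialLinearGroup.coe_pow, hD', clockMatrix_pow_five hζ.pow_eq_one]
  have hDP : ((D * P : SL(5, ℂ)) : Matrix (Fin 5) (Fin 5) ℂ) =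
      ζ • ((P * D : SL(5, ℂ)) : Matrix (Fin 5) (Fin 5) ℂ) := by
    rw [Matrix.SpecialLinearGroup.coe_mul, Matrix.SpecialLinearGroup.coe_mul, hP', hD',
      clockMatrix_mul_shiftMatrix hζ.pow_eq_one]
  refine dvd_finrank_of_mul_eq_smul_mul (a := ρ ⟨D, hDH⟩) (b := ρ ⟨P, hPH⟩) (ω := ζ ^ (4 * n))
    (by norm_num) (hζ.pow_of_coprime _ ?_) (by rw [← map_pow, hD5, map_one])
    ((Group.isUnit _).map ρ) ?_
  · exact ((Nat.Prime.coprime_iff_not_dvd Nat.prime_five).2 (by omega)).symm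
  · rw [← map_mul, ← map_mul]
    refine LinearMap.ext fun f => Subtype.ext ?_
    have hf : (f : MvPolynomial (Fin 5) ℂ).IsHomogeneous n :=
      (mem_homogeneousSubmodule _ _).mp (hV f.2)
    change polyRep (D * P) f = ζ ^ (4 * n) • polyRep (P * D) f
    rw [pow_mul]
    exact polyRep_apply_of_coe_eq_smul hDP hf
end
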